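/- arXiv:2303.08521 — 4 statements merged into one kernel-verified Lean document; each statement's English description precedes it below -/
import Mathlib

section
/- Let (Ω, 𝓕, ℙ) be a probability space, let 0 < 𝐩 < 1 and let 𝐪 satisfy 1/𝐩 + 1/𝐪 = 1 (so 𝐪 < 0). Let X : Ω → (0,∞) be measurable with ∫ X dℙ < ∞. Then (∫ X^𝐩 dℙ)^{1/𝐩} = inf { ∫ X·g dℙ : g : Ω → (0,∞) measurable with ∫ g^𝐪 dℙ ≤ 1 }, and the infimum is attained by some such g (equivalently, it equals the infimum of ∫ X dQ over all measures Q absolutely continuous with respect to ℙ whose density dQ/dℙ is positive a.s. and satisfies (∫ (dQ/dℙ)^𝐪 dℙ)^{1/𝐪} ≥ 1, and an optimal measure Q* exists). -/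
open MeasureTheory Real

/-- Dual representation for `0 < p < 1` (conjugate exponent `q < 0`): for a strictly positive
integrable random variable `X` on a probability space, `(∫ X^p)^{1/p}` is the least value of
`∫ X·g dℙ` over all strictly positive measurable densities `g` with `∫ g^q dℙ ≤ 1`;
in particular the infimum is attained. -/
theorem stmt_2 {Ω : Type*} [MeasurableSpace Ω] (ℙ : Measure Ω) [IsProbabilityMeasure ℙ]
    (p q : ℝ) (hp0 : 0 < p) (hp1 : p < 1) (hpq : 1 / p + 1 / q = 1)
    (X : Ω → ℝ) (hX : Measurable X) (hX0 : ∀ ω, 0 < X ω)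
    (hXint : Integrable X ℙ) :
    IsLeast
      {r : ℝ | ∃ g : Ω → ℝ, Measurable g ∧ (∀ ω, 0 < g ω) ∧
        (∫⁻ ω, ENNReal.ofReal (g ω ^ q) ∂ℙ) ≤ 1 ∧
        Integrable (fun ω => X ω * g ω) ℙ ∧ r = ∫ ω, X ω * g ω ∂ℙ}
      ((∫ ω, X ω ^ p ∂ℙ) ^ (1 / p)) := by
  -- basic facts
  have hq0 : q < 0 := by
    by_contra h
    push_neg at h
    rcases eq_or_lt_of_le h with h1 | h1
    · simp [← h1] at hpq; nlinarith [one_div_pos.2 hp0, (one_div p) ▸ (one_lt_one_div hp0 hp1)]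
    · have h2 : 0 < 1 / q := one_div_pos.2 h1
      have h3 : 1 < 1 / p := by rw [lt_one_div (by norm_num) hp0]; linarith
      linarith
  have hqne : q ≠ 0 := hq0.ne
  have hpne : p ≠ 0 := hp0.ne'
  have hqp : q * (p - 1) = p := by field_simp at hpq; nlinarith [hpq]
  have hXp_int : Integrable (fun ω => X ω ^ p) ℙ := by
    refine (integrable_const (1:ℝ)).add hXint |>.mono' ?_ ?_
    · exact (hX.pow measurable_const).aestronglyMeasurable
    · filter_upwards with ω
      have h1 : 0 < X ω := hX0 ω
      rw [Real.norm_of_nonneg (Real.rpow_nonneg h1.le _)]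
      rcases le_total (X ω) 1 with h | h
      · calc X ω ^ p ≤ 1 := Real.rpow_le_one h1.le h hp0.le
          _ ≤ 1 + X ω := by linarith
      · calc X ω ^ p ≤ X ω ^ (1:ℝ) := Real.rpow_le_rpow_of_exponent_le h (by linarith)
          _ = X ω := Real.rpow_one _
          _ ≤ 1 + X ω := by linarith
  set I : ℝ := ∫ ω, X ω ^ p ∂ℙ with hIdef
  have hI : 0 < I := by
    rw [hIdef, integral_pos_iff_support_of_nonneg (fun ω => Real.rpow_nonneg (hX0 ω).le _) hXp_int]
    have : Function.support (fun ω => X ω ^ p) = Set.univ := by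
      ext ω; simp [Function.support, (Real.rpow_pos_of_pos (hX0 ω) p).ne']
    simp [this]
  have hlXp : ∫⁻ ω, ENNReal.ofReal (X ω ^ p) ∂ℙ = ENNReal.ofReal I := by
    rw [hIdef, ← ofReal_integral_eq_lintegral_ofReal hXp_int]
    exact Filter.Eventually.of_forall fun ω => Real.rpow_nonneg (hX0 ω).le _
  constructor
  · -- membership: take g = X^(p-1) * I^(-(1/q))
    refine ⟨fun ω => X ω ^ (p-1) * I ^ (-(1/q)), (hX.pow measurable_const).mul_const _,
      fun ω => mul_pos (Real.rpow_pos_of_pos (hX0 ω) _) (Real.rpow_pos_of_pos hI _), ?_, ?_, ?_⟩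
    · have key : ∀ ω, (X ω ^ (p-1) * I ^ (-(1/q))) ^ q = X ω ^ p * I⁻¹ := by
        intro ω
        rw [Real.mul_rpow (Real.rpow_nonneg (hX0 ω).le _) (Real.rpow_nonneg hI.le _),
          ← Real.rpow_mul (hX0 ω).le, ← Real.rpow_mul hI.le, mul_comm (p-1) q, hqp,
          show -(1/q) * q = -1 by field_simp, Real.rpow_neg_one]
      simp only [key]
      rw [show (fun ω => ENNReal.ofReal (X ω ^ p * I⁻¹)) = fun ω => ENNReal.ofReal (X ω ^ p) * ENNReal.ofReal I⁻¹ from funext fun ω => ENNReal.ofReal_mul (Real.rpow_nonneg (hX0 ω).le _),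
        lintegral_mul_const _ (by measurability), hlXp, ← ENNReal.ofReal_mul hI.le,
        mul_inv_cancel₀ hI.ne']
      simp
    · have : (fun ω => X ω * (X ω ^ (p-1) * I ^ (-(1/q)))) = fun ω => X ω ^ p * I ^ (-(1/q)) := by
        funext ω
        rw [← mul_assoc]
        congr 1
        rw [← Real.rpow_one_add' (hX0 ω).le (by intro h; nlinarith)]
        ring_nf
      rw [this]
      exact hXp_int.mul_const _
    · have : (fun ω => X ω * (X ω ^ (p-1) * I ^ (-(1/q)))) = fun ω => X ω ^ p * I ^ (-(1/q)) := by
        funext ω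
        rw [← mul_assoc]
        congr 1
        rw [← Real.rpow_one_add' (hX0 ω).le (by intro h; nlinarith)]
        ring_nf
      rw [this, integral_mul_const, ← hIdef]
      rw [show I * I ^ (-(1/q)) = I ^ (1 + -(1/q)) by
        rw [Real.rpow_add hI, Real.rpow_one],
        show (1 : ℝ) + -(1/q) = 1/p by linarith]
  · -- lower bound
    rintro r ⟨g, hg, hg0, hgq, hXgint, rfl⟩
    have hXg0 : ∀ ω, 0 < X ω * g ω := fun ω => mul_pos (hX0 ω) (hg0 ω)
    have hJ : (0:ℝ) ≤ ∫ ω, X ω * g ω ∂ℙ :=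
      integral_nonneg fun ω => (hXg0 ω).le
    set J : ℝ := ∫ ω, X ω * g ω ∂ℙ with hJdef
    have hlJ : ∫⁻ ω, ENNReal.ofReal (X ω * g ω) ∂ℙ = ENNReal.ofReal J := by
      rw [hJdef, ← ofReal_integral_eq_lintegral_ofReal hXgint]
      exact Filter.Eventually.of_forall fun ω => (hXg0 ω).le
    -- Hölder with exponents 1/p and 1/(1-p)
    have hconj : (1/p).HolderConjugate (1/(1-p)) := by
      rw [Real.holderConjugate_iff]
      constructor
      · rw [lt_one_div (by norm_num) hp0]; linarith
      · rw [one_div, one_div, inv_inv, inv_inv]; ring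
    set F : Ω → ENNReal := fun ω => ENNReal.ofReal (X ω * g ω) with hF
    set G : Ω → ENNReal := fun ω => ENNReal.ofReal (g ω) with hG
    have hmeasF : AEMeasurable (fun ω => F ω ^ p) ℙ :=
      ((hX.mul hg).ennreal_ofReal.pow measurable_const).aemeasurable
    have hmeasG : AEMeasurable (fun ω => G ω ^ (-p)) ℙ :=
      (hg.ennreal_ofReal.pow measurable_const).aemeasurable
    have holder := ENNReal.lintegral_mul_le_Lp_mul_Lq ℙ hconj hmeasF hmeasG
    have hGne : ∀ ω, G ω ≠ 0 := fun ω => by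
      simp [hG, ENNReal.ofReal_eq_zero, not_le, hg0 ω]
    have hGnetop : ∀ ω, G ω ≠ ⊤ := fun ω => ENNReal.ofReal_ne_top
    -- simplify LHS of holder
    have hLHS : ∀ ω, F ω ^ p * G ω ^ (-p) = ENNReal.ofReal (X ω ^ p) := by
      intro ω
      have : F ω = ENNReal.ofReal (X ω) * G ω := by
        simp only [hF, hG]; exact ENNReal.ofReal_mul (hX0 ω).le
      rw [this, ENNReal.mul_rpow_of_nonneg _ _ hp0.le, mul_assoc,
        ← ENNReal.rpow_add _ _ (hGne ω) (hGnetop ω)]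
      simp [← ENNReal.ofReal_rpow_of_pos (hX0 ω)]
    -- simplify RHS factors
    have hRHS1 : (∫⁻ ω, (F ω ^ p) ^ (1/p) ∂ℙ) ^ (1/(1/p)) = (ENNReal.ofReal J) ^ p := by
      rw [one_div_one_div]
      congr 1
      rw [← hlJ]
      refine lintegral_congr fun ω => ?_
      rw [← ENNReal.rpow_mul, mul_one_div, div_self hpne, ENNReal.rpow_one]
    have hRHS2 : (∫⁻ ω, (G ω ^ (-p)) ^ (1/(1-p)) ∂ℙ) ^ (1/(1/(1-p))) ≤ 1 := by
      rw [one_div_one_div]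
      refine ENNReal.rpow_le_one ?_ (by linarith)
      calc (∫⁻ ω, (G ω ^ (-p)) ^ (1/(1-p)) ∂ℙ)
          = ∫⁻ ω, ENNReal.ofReal (g ω ^ q) ∂ℙ := by
            refine lintegral_congr fun ω => ?_
            have h1p : (1:ℝ) - p ≠ 0 := by intro h; rw [sub_eq_zero] at h; exact hp1.ne h.symm
            have hexp : -p * (1/(1-p)) = q := by
              field_simp
              nlinarith [hqp]
            rw [← ENNReal.rpow_mul, hexp, ENNReal.ofReal_rpow_of_pos (hg0 ω)]
        _ ≤ 1 := hgq
    have key : ENNReal.ofReal I ≤ (ENNReal.ofReal J) ^ p := by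
      calc ENNReal.ofReal I = ∫⁻ ω, ENNReal.ofReal (X ω ^ p) ∂ℙ := hlXp.symm
        _ = ∫⁻ ω, ((fun ω => F ω ^ p) * fun ω => G ω ^ (-p)) ω ∂ℙ := by
            refine lintegral_congr fun ω => ?_
            simp [hLHS ω]
        _ ≤ _ := holder
        _ ≤ (ENNReal.ofReal J) ^ p * 1 := by
            rw [← hRHS1]
            exact mul_le_mul_right hRHS2 _
        _ = (ENNReal.ofReal J) ^ p := mul_one _
    -- convert back to reals
    have key2 : I ≤ J ^ p := by
      rw [ENNReal.ofReal_rpow_of_nonneg hJ hp0.le] at key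
      exact (ENNReal.ofReal_le_ofReal_iff (Real.rpow_nonneg hJ _)).mp key
    calc I ^ (1/p) ≤ (J ^ p) ^ (1/p) :=
          Real.rpow_le_rpow hI.le key2 (by positivity)
      _ = J := by
          rw [← Real.rpow_mul hJ, mul_one_div, div_self hpne, Real.rpow_one]
end

section
/- Let (Ω, 𝓕, ℙ) be a probability space, let 𝐩 < 0 and let 𝐪 satisfy 1/𝐩 + 1/𝐪 = 1 (so 0 < 𝐪 < 1). Let X : Ω → (0,∞) be measurable with ∫ X dℙ < ∞ and ∫ X^𝐩 dℙ < ∞. Then (∫ X^𝐩 dℙ)^{1/𝐩} = inf { ∫ X·g dℙ : g : Ω → [0,∞) measurable with ∫ g^𝐪 dℙ ≥ 1 }, and the infimum is attained by some such g. -/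
open MeasureTheory Real

/-- Dual representation for `p < 0` (conjugate exponent `0 < q < 1`): for a strictly positive
random variable `X` on a probability space with `X` and `X^p` integrable, `(∫ X^p)^{1/p}` is
the least value of `∫ X·g dℙ` over all nonnegative measurable densities `g` with
`∫ g^q dℙ ≥ 1`; in particular the infimum is attained. -/
theorem stmt_3 {Ω : Type*} [MeasurableSpace Ω] (ℙ : Measure Ω) [IsProbabilityMeasure ℙ]
    (p q : ℝ) (hp : p < 0) (hpq : 1 / p + 1 / q = 1)
    (X : Ω → ℝ) (hX : Measurable X) (hX0 : ∀ ω, 0 < X ω)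
    (hXint : Integrable X ℙ) (hXp : Integrable (fun ω => X ω ^ p) ℙ) :
    IsLeast
      {r : ℝ | ∃ g : Ω → ℝ, Measurable g ∧ (∀ ω, 0 ≤ g ω) ∧
        1 ≤ (∫⁻ ω, ENNReal.ofReal (g ω ^ q) ∂ℙ) ∧
        Integrable (fun ω => X ω * g ω) ℙ ∧ r = ∫ ω, X ω * g ω ∂ℙ}
      ((∫ ω, X ω ^ p ∂ℙ) ^ (1 / p)) := by
  have hpne : p ≠ 0 := ne_of_lt hp
  have hp' : 1 / p < 0 := div_neg_of_pos_of_neg one_pos hp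
  have hq1' : 1 < 1 / q := by linarith
  have hq0 : 0 < q := one_div_pos.mp (by linarith)
  have hqne : q ≠ 0 := ne_of_gt hq0
  have hq1 : q < 1 := by
    have := (lt_div_iff₀ hq0).mp hq1'
    linarith
  have h1qne : (1:ℝ) - q ≠ 0 := by linarith
  have hpqmul : q + p = p * q := by
    field_simp at hpq
    linarith
  have hqp : (p - 1) * q = p := by linarith
  have h1p : (q - 1) * (1 / q) = 1 / p := by
    field_simp
    linarith
  have hqq : -q * (1 / (1 - q)) = p := by
    field_simp
    linarith
  have hXppos : ∀ ω, (0:ℝ) < X ω ^ p := fun ω => Real.rpow_pos_of_pos (hX0 ω) p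
  set I : ℝ := ∫ ω, X ω ^ p ∂ℙ with hIdef
  have hI : 0 < I := by
    rw [hIdef, integral_pos_iff_support_of_nonneg (fun ω => (hXppos ω).le) hXp]
    have hs : Function.support (fun ω => X ω ^ p) = Set.univ := by
      ext ω; simp [(hXppos ω).ne']
    rw [hs]
    simp
  have hIlint : (∫⁻ ω, ENNReal.ofReal (X ω ^ p) ∂ℙ) = ENNReal.ofReal I :=
    (ofReal_integral_eq_lintegral_ofReal hXp
      (Filter.Eventually.of_forall fun ω => (hXppos ω).le)).symm
  constructor
  · -- membership: the infimum is attained at g₀ = I^(-1/q) • X^(p-1)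
    refine ⟨fun ω => I ^ (-(1/q)) * X ω ^ (p-1), measurable_const.mul (hX.pow measurable_const),
      fun ω => mul_nonneg (Real.rpow_nonneg hI.le _) (Real.rpow_nonneg (hX0 ω).le _), ?_, ?_, ?_⟩
    · have hptw : ∀ ω, (I ^ (-(1/q)) * X ω ^ (p-1)) ^ q = I⁻¹ * X ω ^ p := by
        intro ω
        rw [Real.mul_rpow (Real.rpow_nonneg hI.le _) (Real.rpow_nonneg (hX0 ω).le _),
          ← Real.rpow_mul hI.le, ← Real.rpow_mul (hX0 ω).le, hqp]
        congr 1
        rw [neg_mul, one_div, inv_mul_cancel₀ hqne, Real.rpow_neg_one]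
      have hcalc : (∫⁻ ω, ENNReal.ofReal ((I ^ (-(1/q)) * X ω ^ (p-1)) ^ q) ∂ℙ) = 1 := by
        calc (∫⁻ ω, ENNReal.ofReal ((I ^ (-(1/q)) * X ω ^ (p-1)) ^ q) ∂ℙ)
            = ∫⁻ ω, ENNReal.ofReal (I⁻¹ * X ω ^ p) ∂ℙ := by simp_rw [hptw]
          _ = ENNReal.ofReal (∫ ω, I⁻¹ * X ω ^ p ∂ℙ) :=
              (ofReal_integral_eq_lintegral_ofReal (hXp.const_mul _)
                (Filter.Eventually.of_forall fun ω => mul_nonneg (inv_nonneg.mpr hI.le) (hXppos ω).le)).symm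
          _ = 1 := by
              rw [integral_const_mul, inv_mul_cancel₀ hI.ne', ENNReal.ofReal_one]
      exact le_of_eq hcalc.symm
    · have hmul : (fun ω => X ω * (I ^ (-(1/q)) * X ω ^ (p-1)))
          = fun ω => I ^ (-(1/q)) * X ω ^ p := by
        funext ω
        calc X ω * (I ^ (-(1/q)) * X ω ^ (p-1))
            = I ^ (-(1/q)) * (X ω ^ (1:ℝ) * X ω ^ (p-1)) := by rw [Real.rpow_one]; ring
          _ = I ^ (-(1/q)) * X ω ^ p := by rw [← Real.rpow_add (hX0 ω)]; norm_num
      rw [hmul]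
      exact hXp.const_mul _
    · have hmul : (fun ω => X ω * (I ^ (-(1/q)) * X ω ^ (p-1)))
          = fun ω => I ^ (-(1/q)) * X ω ^ p := by
        funext ω
        calc X ω * (I ^ (-(1/q)) * X ω ^ (p-1))
            = I ^ (-(1/q)) * (X ω ^ (1:ℝ) * X ω ^ (p-1)) := by rw [Real.rpow_one]; ring
          _ = I ^ (-(1/q)) * X ω ^ p := by rw [← Real.rpow_add (hX0 ω)]; norm_num
      rw [hmul, integral_const_mul, ← hIdef]
      calc I ^ (1/p) = I ^ (-(1/q) + 1) := by rw [show (1:ℝ)/p = -(1/q) + 1 by linarith]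
        _ = I ^ (-(1/q)) * I ^ (1:ℝ) := Real.rpow_add hI _ _
        _ = I ^ (-(1/q)) * I := by rw [Real.rpow_one]
  · -- lower bound via reverse Hölder
    rintro r ⟨g, hgm, hg0, hgq, hgint, rfl⟩
    set a : ℝ := ∫ ω, X ω * g ω ∂ℙ with hadef
    have ha0 : 0 ≤ a :=
      integral_nonneg fun ω => mul_nonneg (hX0 ω).le (hg0 ω)
    have hconj : (1/q).HolderConjugate (1/(1-q)) := by
      refine Real.holderConjugate_iff.mpr ⟨hq1', ?_⟩
      rw [one_div, one_div, inv_inv, inv_inv]; ring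
    set F : Ω → ENNReal := fun ω => ENNReal.ofReal ((X ω * g ω) ^ q) with hFdef
    set G : Ω → ENNReal := fun ω => ENNReal.ofReal (X ω ^ (-q)) with hGdef
    have hFm : Measurable F := ((hX.mul hgm).pow measurable_const).ennreal_ofReal
    have hGm : Measurable G := (hX.pow measurable_const).ennreal_ofReal
    have holder := ENNReal.lintegral_mul_le_Lp_mul_Lq ℙ hconj hFm.aemeasurable hGm.aemeasurable
    rw [one_div_one_div, one_div_one_div] at holder
    -- identify the three integrands
    have hFG : ∀ ω, (F * G) ω = ENNReal.ofReal (g ω ^ q) := by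
      intro ω
      show ENNReal.ofReal ((X ω * g ω) ^ q) * ENNReal.ofReal (X ω ^ (-q))
          = ENNReal.ofReal (g ω ^ q)
      rw [← ENNReal.ofReal_mul (Real.rpow_nonneg (mul_nonneg (hX0 ω).le (hg0 ω)) q)]
      congr 1
      rw [Real.mul_rpow (hX0 ω).le (hg0 ω), mul_right_comm,
        ← Real.rpow_add (hX0 ω)]
      simp
    have hFq : ∀ ω, F ω ^ (1/q) = ENNReal.ofReal (X ω * g ω) := by
      intro ω
      simp only [hFdef]
      rw [ENNReal.ofReal_rpow_of_nonneg (Real.rpow_nonneg (mul_nonneg (hX0 ω).le (hg0 ω)) q)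
          (one_div_pos.mpr hq0).le,
        ← Real.rpow_mul (mul_nonneg (hX0 ω).le (hg0 ω)), mul_one_div_cancel hqne,
        Real.rpow_one]
    have hGq : ∀ ω, G ω ^ (1/(1-q)) = ENNReal.ofReal (X ω ^ p) := by
      intro ω
      simp only [hGdef]
      rw [ENNReal.ofReal_rpow_of_nonneg (Real.rpow_nonneg (hX0 ω).le (-q))
          (one_div_pos.mpr (by linarith : (0:ℝ) < 1 - q)).le,
        ← Real.rpow_mul (hX0 ω).le, hqq]
    simp_rw [hFG, hFq, hGq] at holder
    have halint : (∫⁻ ω, ENNReal.ofReal (X ω * g ω) ∂ℙ) = ENNReal.ofReal a :=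
      (ofReal_integral_eq_lintegral_ofReal hgint
        (Filter.Eventually.of_forall fun ω => mul_nonneg (hX0 ω).le (hg0 ω))).symm
    rw [halint, hIlint] at holder
    have hone : (1:ENNReal) ≤ ENNReal.ofReal (a ^ q * I ^ (1-q)) := by
      refine le_trans (le_trans hgq holder) (le_of_eq ?_)
      rw [ENNReal.ofReal_rpow_of_nonneg ha0 hq0.le,
        ENNReal.ofReal_rpow_of_nonneg hI.le (by linarith : (0:ℝ) ≤ 1 - q),
        ← ENNReal.ofReal_mul (Real.rpow_nonneg ha0 q)]
    have hone' : (1:ℝ) ≤ a ^ q * I ^ (1-q) := by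
      by_contra h
      push_neg at h
      exact absurd hone (by simpa using ENNReal.ofReal_lt_one.mpr h)
    have hmulc : I ^ (q-1) * I ^ (1-q) = 1 := by
      rw [← Real.rpow_add hI]; norm_num
    have key : I ^ (q-1) ≤ a ^ q := by
      calc I ^ (q-1) = I ^ (q-1) * 1 := (mul_one _).symm
        _ ≤ I ^ (q-1) * (a ^ q * I ^ (1-q)) :=
            mul_le_mul_of_nonneg_left hone' (Real.rpow_pos_of_pos hI _).le
        _ = a ^ q * (I ^ (q-1) * I ^ (1-q)) := by ring
        _ = a ^ q := by rw [hmulc, mul_one]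
    have final : (I ^ (q-1)) ^ (1/q) ≤ (a ^ q) ^ (1/q) :=
      Real.rpow_le_rpow (Real.rpow_pos_of_pos hI _).le key (by positivity)
    rw [← Real.rpow_mul hI.le, ← Real.rpow_mul ha0, h1p, mul_one_div_cancel hqne,
      Real.rpow_one] at final
    exact final
end

section
/- In the Bayesian investment model with discrete prior, assume additionally that ‖ϑ_1‖ < ‖ϑ_2‖ < … < ‖ϑ_m‖ and that γ > 1 (corresponding to a risk-aversion parameter α = 1 − 1/γ ∈ (0,1)). Then for every t ≥ 0 and every y ∈ ℝ^d: lim_{T → ∞} κ(t, T, y) = γ (σ^⊤)^{−1} ϑ_m, i.e. the optimal investment fraction converges to the Merton fraction of the drift scenario with the largest Euclidean norm. -/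
open MeasureTheory Real Filter

/-- Density of the `N(0, T·I_d)` distribution on `ℝ^d`. -/
noncomputable def gaussDensity (d : ℕ) (T : ℝ) (z : Fin d → ℝ) : ℝ :=
  (2 * π * T) ^ (-(d : ℝ) / 2) * Real.exp (-(∑ i, z i ^ 2) / (2 * T))

/-- Likelihood factor `L_t(ϑ, z) = exp(⟨z, ϑ⟩ - ½‖ϑ‖²t)`. -/
noncomputable def likelihood (d : ℕ) (t : ℝ) (ϑ z : Fin d → ℝ) : ℝ :=
  Real.exp ((∑ i, z i * ϑ i) - (∑ i, ϑ i ^ 2) * t / 2)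

/-- `F(t, z) = ∑_k p_k L_t(ϑ_k, z)` for the discrete prior `(p_k, ϑ_k)`. -/
noncomputable def priorF (d m : ℕ) (p : Fin m → ℝ) (ϑ : Fin m → Fin d → ℝ)
    (t : ℝ) (z : Fin d → ℝ) : ℝ :=
  ∑ k, p k * likelihood d t (ϑ k) z

/-- Optimal Bayesian investment fraction
`κ(t, T, y) = γ (σᵀ)⁻¹ [∫ (∑_k p_k ϑ_k L_T(ϑ_k, y+z)) F(T, y+z)^{γ-1} φ_{T-t}(z) dz] /
[∫ F(T, y+z)^γ φ_{T-t}(z) dz]`. -/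
noncomputable def kappa (d m : ℕ) (σ : Matrix (Fin d) (Fin d) ℝ)
    (p : Fin m → ℝ) (ϑ : Fin m → Fin d → ℝ) (γ t T : ℝ) (y : Fin d → ℝ) :
    Fin d → ℝ :=
  γ • ((σ.transpose)⁻¹).mulVec
    ((∫ z : Fin d → ℝ, priorF d m p ϑ T (y + z) ^ γ * gaussDensity d (T - t) z)⁻¹ •
      ∫ z : Fin d → ℝ,
        (priorF d m p ϑ T (y + z) ^ (γ - 1) * gaussDensity d (T - t) z) •
          ∑ k, (p k * likelihood d T (ϑ k) (y + z)) • ϑ k)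

noncomputable def expInner (d : ℕ) (w z : Fin d → ℝ) : ℝ := Real.exp (∑ i, z i * w i)

noncomputable def ellC (d : ℕ) (pk : ℝ) (ϑk y : Fin d → ℝ) (T : ℝ) : ℝ :=
  pk * Real.exp ((∑ i, y i * ϑk i) - (∑ i, ϑk i ^ 2) * T / 2)

lemma gauss1d_pointwise {s : ℝ} (hs : 0 < s) (c x : ℝ) :
    Real.exp (c * x) * ((2 * π * s) ^ (-(1:ℝ)/2) * Real.exp (-(x^2) / (2*s))) =
      ((2 * π * s) ^ (-(1:ℝ)/2) * Real.exp (s * c^2 / 2)) *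
        Real.exp (-(1/(2*s)) * (x - s*c)^2) := by
  have : Real.exp (c * x) * Real.exp (-(x^2) / (2*s)) =
      Real.exp (s * c^2 / 2) * Real.exp (-(1/(2*s)) * (x - s*c)^2) := by
    rw [← Real.exp_add, ← Real.exp_add]
    congr 1
    field_simp
    ring
  calc Real.exp (c * x) * ((2 * π * s) ^ (-(1:ℝ)/2) * Real.exp (-(x^2) / (2*s)))
      = (2 * π * s) ^ (-(1:ℝ)/2) * (Real.exp (c * x) * Real.exp (-(x^2) / (2*s))) := by ring
    _ = _ := by rw [this]; ring

lemma gauss1d_integrable {s : ℝ} (hs : 0 < s) (c : ℝ) :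
    Integrable (fun x : ℝ => Real.exp (c * x) *
      ((2 * π * s) ^ (-(1:ℝ)/2) * Real.exp (-(x^2) / (2*s)))) := by
  have hb : 0 < 1/(2*s) := by positivity
  have h : Integrable (fun x : ℝ => Real.exp (-(1/(2*s)) * (x - s*c)^2)) :=
    (integrable_exp_neg_mul_sq hb).comp_sub_right (s*c)
  have h2 := h.const_mul ((2 * π * s) ^ (-(1:ℝ)/2) * Real.exp (s * c^2 / 2))
  exact h2.congr (by filter_upwards with x using (gauss1d_pointwise hs c x).symm)

lemma sqrt_diff {s : ℝ} (hs : 0 < s) :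
    (2 * π * s) ^ (-(1:ℝ)/2) * Real.sqrt (π / (1/(2*s))) = 1 := by
  have h2 : (0:ℝ) < 2 * π * s := by positivity
  rw [show π / (1/(2*s)) = 2 * π * s by field_simp, Real.sqrt_eq_rpow,
    ← Real.rpow_add h2]
  norm_num

lemma gauss1d_integral {s : ℝ} (hs : 0 < s) (c : ℝ) :
    ∫ x : ℝ, Real.exp (c * x) * ((2 * π * s) ^ (-(1:ℝ)/2) * Real.exp (-(x^2) / (2*s))) =
      Real.exp (s * c^2 / 2) := by
  simp_rw [gauss1d_pointwise hs c]
  rw [MeasureTheory.integral_const_mul,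
    integral_sub_right_eq_self (fun x => Real.exp (-(1/(2*s)) * x^2)) (s*c),
    integral_gaussian, mul_comm ((2 * π * s) ^ (-(1:ℝ)/2)), mul_assoc, sqrt_diff hs, mul_one]

lemma gauss_prod {d : ℕ} {s : ℝ} (hs : 0 < s) (w z : Fin d → ℝ) :
    expInner d w z * gaussDensity d s z =
      ∏ i, (Real.exp (w i * z i) * ((2 * π * s) ^ (-(1:ℝ)/2) * Real.exp (-((z i)^2) / (2*s)))) := by
  have h2 : (0:ℝ) < 2 * π * s := by positivity
  have hpow : (2 * π * s) ^ (-(d : ℝ) / 2) = ∏ _i : Fin d, (2 * π * s) ^ (-(1:ℝ)/2) := by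
    rw [Finset.prod_const, ← Real.rpow_natCast ((2 * π * s) ^ (-(1:ℝ)/2)) _,
      ← Real.rpow_mul h2.le]
    congr 1
    simp [Finset.card_univ]
    ring
  have hsum : ∑ i, (-((z i)^2) / (2*s)) = (-∑ i, z i ^ 2) / (2*s) := by
    rw [← Finset.sum_div, ← Finset.sum_neg_distrib]
  symm
  rw [Finset.prod_mul_distrib, Finset.prod_mul_distrib, ← Real.exp_sum, ← Real.exp_sum,
    expInner, gaussDensity, hpow, hsum]
  congr 2
  exact Finset.sum_congr rfl fun i _ => mul_comm _ _

lemma expInner_gauss_integrable {d : ℕ} {s : ℝ} (hs : 0 < s) (w : Fin d → ℝ) :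
    Integrable (fun z : Fin d → ℝ => expInner d w z * gaussDensity d s z) := by
  have h := MeasureTheory.Integrable.fintype_prod (𝕜 := ℝ)
    (f := fun i (x : ℝ) => Real.exp (w i * x) * ((2 * π * s) ^ (-(1:ℝ)/2) * Real.exp (-(x^2) / (2*s))))
    (fun i => gauss1d_integrable hs (w i))
  exact h.congr (Filter.Eventually.of_forall fun z => (gauss_prod hs w z).symm)

lemma expInner_gauss_integral {d : ℕ} {s : ℝ} (hs : 0 < s) (w : Fin d → ℝ) :
    ∫ z : Fin d → ℝ, expInner d w z * gaussDensity d s z =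
      Real.exp (s * (∑ i, (w i)^2) / 2) := by
  simp_rw [gauss_prod hs w]
  rw [MeasureTheory.integral_fintype_prod_volume_eq_prod
    (f := fun i (x : ℝ) => Real.exp (w i * x) * ((2 * π * s) ^ (-(1:ℝ)/2) * Real.exp (-(x^2) / (2*s))))]
  simp_rw [gauss1d_integral hs]
  rw [← Real.exp_sum]
  congr 1
  rw [Finset.mul_sum, Finset.sum_div]

lemma exp_rpow' (a b : ℝ) : (Real.exp a) ^ b = Real.exp (a * b) := by
  rw [Real.rpow_def_of_pos (Real.exp_pos a), Real.log_exp]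

lemma ell_eq (d : ℕ) (pk : ℝ) (ϑk y : Fin d → ℝ) (T : ℝ) (z : Fin d → ℝ) :
    pk * likelihood d T ϑk (y + z) = ellC d pk ϑk y T * expInner d ϑk z := by
  unfold likelihood ellC expInner
  rw [mul_assoc, ← Real.exp_add]
  congr 2
  have : ∑ i, (y + z) i * ϑk i = (∑ i, y i * ϑk i) + ∑ i, z i * ϑk i := by
    rw [← Finset.sum_add_distrib]
    exact Finset.sum_congr rfl fun i _ => by simp [add_mul]
  rw [this]; ring

lemma ellC_pos {d : ℕ} {pk : ℝ} (hpk : 0 < pk) (ϑk y : Fin d → ℝ) (T : ℝ) :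
    0 < ellC d pk ϑk y T := mul_pos hpk (Real.exp_pos _)

lemma expInner_smul (d : ℕ) (q : ℝ) (w z : Fin d → ℝ) :
    expInner d w z ^ q = expInner d (q • w) z := by
  unfold expInner
  rw [exp_rpow']
  congr 1
  rw [Finset.sum_mul]
  exact Finset.sum_congr rfl fun i _ => by simp; ring

lemma expInner_mul (d : ℕ) (w v z : Fin d → ℝ) :
    expInner d w z * expInner d v z = expInner d (w + v) z := by
  unfold expInner
  rw [← Real.exp_add, ← Finset.sum_add_distrib]
  congr 1
  exact Finset.sum_congr rfl fun i _ => by simp [mul_add]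

lemma priorF_eq (d m : ℕ) (p : Fin m → ℝ) (ϑ : Fin m → Fin d → ℝ) (T : ℝ) (y z : Fin d → ℝ) :
    priorF d m p ϑ T (y + z) = ∑ k, ellC d (p k) (ϑ k) y T * expInner d (ϑ k) z := by
  unfold priorF
  exact Finset.sum_congr rfl fun k _ => ell_eq d (p k) (ϑ k) y T z

lemma priorF_pos {d m : ℕ} (hm : 0 < m) {p : Fin m → ℝ} (hp : ∀ k, 0 < p k)
    (ϑ : Fin m → Fin d → ℝ) (T : ℝ) (x : Fin d → ℝ) : 0 < priorF d m p ϑ T x := by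
  unfold priorF
  have : Nonempty (Fin m) := ⟨⟨0, hm⟩⟩
  exact Finset.sum_pos (fun k _ => mul_pos (hp k) (Real.exp_pos _)) Finset.univ_nonempty

lemma rpow_sum_le {m : ℕ} (hm : 0 < m) {x : Fin m → ℝ} (hx : ∀ j, 0 ≤ x j) {q : ℝ} (hq : 0 ≤ q) :
    (∑ j, x j) ^ q ≤ (m : ℝ) ^ q * ∑ j, x j ^ q := by
  have : Nonempty (Fin m) := ⟨⟨0, hm⟩⟩
  obtain ⟨j0, -, hj0⟩ := Finset.exists_max_image Finset.univ x Finset.univ_nonempty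
  have h1 : ∑ j, x j ≤ (m : ℝ) * x j0 := by
    calc ∑ j, x j ≤ ∑ _j : Fin m, x j0 := Finset.sum_le_sum fun j _ => hj0 j (Finset.mem_univ j)
    _ = (m : ℝ) * x j0 := by simp [Finset.sum_const, nsmul_eq_mul]
  calc (∑ j, x j) ^ q ≤ ((m : ℝ) * x j0) ^ q :=
        Real.rpow_le_rpow (Finset.sum_nonneg fun j _ => hx j) h1 hq
    _ = (m : ℝ) ^ q * x j0 ^ q := Real.mul_rpow (by positivity) (hx j0)
    _ ≤ (m : ℝ) ^ q * ∑ j, x j ^ q := by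
        gcongr
        exact Finset.single_le_sum (fun j _ => Real.rpow_nonneg (hx j) q) (Finset.mem_univ j0)

lemma cont_priorF {d m : ℕ} (p : Fin m → ℝ) (ϑ : Fin m → Fin d → ℝ) (T : ℝ) (y : Fin d → ℝ) :
    Continuous fun z : Fin d → ℝ => priorF d m p ϑ T (y + z) := by
  unfold priorF likelihood
  refine continuous_finset_sum _ fun k _ => Continuous.mul continuous_const ?_
  refine Real.continuous_exp.comp (Continuous.sub (continuous_finset_sum _ fun i _ => ?_) continuous_const)
  exact (Continuous.add continuous_const (continuous_apply i)).mul continuous_const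

lemma cont_gauss {d : ℕ} (s : ℝ) : Continuous (gaussDensity d s) := by
  unfold gaussDensity
  refine Continuous.mul continuous_const (Real.continuous_exp.comp ?_)
  exact ((continuous_finset_sum _ fun i _ => (continuous_apply i).pow 2).neg).div_const _

lemma cont_likelihood {d : ℕ} (ϑk : Fin d → ℝ) (T : ℝ) (y : Fin d → ℝ) :
    Continuous fun z : Fin d → ℝ => likelihood d T ϑk (y + z) := by
  unfold likelihood
  refine Real.continuous_exp.comp (Continuous.sub (continuous_finset_sum _ fun i _ => ?_) continuous_const)
  exact (Continuous.add continuous_const (continuous_apply i)).mul continuous_const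

lemma gaussDensity_pos {d : ℕ} {s : ℝ} (hs : 0 < s) (z : Fin d → ℝ) : 0 < gaussDensity d s z := by
  unfold gaussDensity
  have : (0:ℝ) < 2 * π * s := by positivity
  positivity

noncomputable def NkInt (d m : ℕ) (p : Fin m → ℝ) (ϑ : Fin m → Fin d → ℝ)
    (γ t : ℝ) (y : Fin d → ℝ) (k : Fin m) (T : ℝ) : ℝ :=
  ∫ z : Fin d → ℝ, priorF d m p ϑ T (y + z) ^ (γ - 1) *
    (p k * likelihood d T (ϑ k) (y + z)) * gaussDensity d (T - t) z

noncomputable def DInt (d m : ℕ) (p : Fin m → ℝ) (ϑ : Fin m → Fin d → ℝ)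
    (γ t : ℝ) (y : Fin d → ℝ) (T : ℝ) : ℝ :=
  ∫ z : Fin d → ℝ, priorF d m p ϑ T (y + z) ^ γ * gaussDensity d (T - t) z

section Main
variable {d m : ℕ} {p : Fin m → ℝ} {ϑ : Fin m → Fin d → ℝ} {γ t T : ℝ} {y : Fin d → ℝ}

lemma expInner_pos (d : ℕ) (w z : Fin d → ℝ) : 0 < expInner d w z := Real.exp_pos _

lemma term_nonneg (hm : 0 < m) (hp : ∀ k, 0 < p k) (hT : t < T) (k : Fin m) (z : Fin d → ℝ) :
    0 ≤ priorF d m p ϑ T (y + z) ^ (γ - 1) *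
      (p k * likelihood d T (ϑ k) (y + z)) * gaussDensity d (T - t) z := by
  have h1 := priorF_pos hm hp ϑ T (y + z)
  have h3 := (gaussDensity_pos (d := d) (sub_pos.2 hT) z).le
  refine mul_nonneg (mul_nonneg (Real.rpow_nonneg h1.le _) ?_) h3
  exact mul_nonneg (hp k).le (le_of_lt (Real.exp_pos _))

lemma term_le (hm : 0 < m) (hp : ∀ k, 0 < p k) (hγ : 1 ≤ γ) (hT : t < T)
    (k : Fin m) (z : Fin d → ℝ) :
    priorF d m p ϑ T (y + z) ^ (γ - 1) *
      (p k * likelihood d T (ϑ k) (y + z)) * gaussDensity d (T - t) z ≤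
    (m : ℝ) ^ (γ - 1) * ∑ j, ellC d (p j) (ϑ j) y T ^ (γ - 1) * ellC d (p k) (ϑ k) y T *
      (expInner d ((γ - 1) • ϑ j + ϑ k) z * gaussDensity d (T - t) z) := by
  have hs : 0 < T - t := sub_pos.2 hT
  have hφ := (gaussDensity_pos (d := d) hs z).le
  have hq : (0:ℝ) ≤ γ - 1 := by linarith
  have hx : ∀ j : Fin m, 0 ≤ ellC d (p j) (ϑ j) y T * expInner d (ϑ j) z :=
    fun j => le_of_lt (mul_pos (ellC_pos (hp j) _ _ _) (expInner_pos _ _ _))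
  have h1 : priorF d m p ϑ T (y + z) ^ (γ - 1) ≤
      (m : ℝ) ^ (γ - 1) * ∑ j, (ellC d (p j) (ϑ j) y T * expInner d (ϑ j) z) ^ (γ - 1) := by
    rw [priorF_eq]
    exact rpow_sum_le hm hx hq
  have h2 : p k * likelihood d T (ϑ k) (y + z) = ellC d (p k) (ϑ k) y T * expInner d (ϑ k) z :=
    ell_eq d (p k) (ϑ k) y T z
  have hℓk : 0 ≤ p k * likelihood d T (ϑ k) (y + z) := by rw [h2]; exact hx k
  calc priorF d m p ϑ T (y + z) ^ (γ - 1) *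
        (p k * likelihood d T (ϑ k) (y + z)) * gaussDensity d (T - t) z
      ≤ ((m : ℝ) ^ (γ - 1) * ∑ j, (ellC d (p j) (ϑ j) y T * expInner d (ϑ j) z) ^ (γ - 1)) *
        (p k * likelihood d T (ϑ k) (y + z)) * gaussDensity d (T - t) z := by
        gcongr
    _ = (m : ℝ) ^ (γ - 1) * ∑ j, ((ellC d (p j) (ϑ j) y T * expInner d (ϑ j) z) ^ (γ - 1) *
          (ellC d (p k) (ϑ k) y T * expInner d (ϑ k) z * gaussDensity d (T - t) z)) := by
        rw [h2, mul_assoc, mul_assoc, Finset.sum_mul]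
    _ = (m : ℝ) ^ (γ - 1) * ∑ j, ellC d (p j) (ϑ j) y T ^ (γ - 1) * ellC d (p k) (ϑ k) y T *
          (expInner d ((γ - 1) • ϑ j + ϑ k) z * gaussDensity d (T - t) z) := by
        congr 1
        refine Finset.sum_congr rfl fun j _ => ?_
        rw [Real.mul_rpow (ellC_pos (hp j) _ _ _).le (expInner_pos _ _ _).le, expInner_smul,
          ← expInner_mul]
        ring

lemma integrable_Nk (hm : 0 < m) (hp : ∀ k, 0 < p k) (hγ : 1 ≤ γ) (hT : t < T) (k : Fin m) :
    Integrable (fun z : Fin d → ℝ => priorF d m p ϑ T (y + z) ^ (γ - 1) *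
      (p k * likelihood d T (ϑ k) (y + z)) * gaussDensity d (T - t) z) := by
  have hs : 0 < T - t := sub_pos.2 hT
  have hbound : Integrable (fun z : Fin d → ℝ =>
      (m : ℝ) ^ (γ - 1) * ∑ j, ellC d (p j) (ϑ j) y T ^ (γ - 1) * ellC d (p k) (ϑ k) y T *
        (expInner d ((γ - 1) • ϑ j + ϑ k) z * gaussDensity d (T - t) z)) := by
    refine Integrable.const_mul ?_ _
    exact integrable_finset_sum _ fun j _ =>
      ((expInner_gauss_integrable hs _).const_mul _)
  have hcont : Continuous (fun z : Fin d → ℝ => priorF d m p ϑ T (y + z) ^ (γ - 1) *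
      (p k * likelihood d T (ϑ k) (y + z)) * gaussDensity d (T - t) z) := by
    refine Continuous.mul (Continuous.mul ?_ (continuous_const.mul (cont_likelihood _ _ _))) (cont_gauss _)
    exact (cont_priorF p ϑ T y).rpow_const fun z => Or.inl (priorF_pos hm hp ϑ T (y + z)).ne'
  refine Integrable.mono' hbound hcont.aestronglyMeasurable ?_
  filter_upwards with z
  rw [Real.norm_eq_abs, abs_of_nonneg (term_nonneg hm hp hT k z)]
  exact term_le hm hp hγ hT k z

lemma NkInt_le (hm : 0 < m) (hp : ∀ k, 0 < p k) (hγ : 1 ≤ γ) (hT : t < T) (k : Fin m) :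
    NkInt d m p ϑ γ t y k T ≤
      (m : ℝ) ^ (γ - 1) * ∑ j, ellC d (p j) (ϑ j) y T ^ (γ - 1) * ellC d (p k) (ϑ k) y T *
        Real.exp ((T - t) * (∑ i, (((γ - 1) • ϑ j + ϑ k) i)^2) / 2) := by
  have hs : 0 < T - t := sub_pos.2 hT
  have hbound : Integrable (fun z : Fin d → ℝ =>
      (m : ℝ) ^ (γ - 1) * ∑ j, ellC d (p j) (ϑ j) y T ^ (γ - 1) * ellC d (p k) (ϑ k) y T *
        (expInner d ((γ - 1) • ϑ j + ϑ k) z * gaussDensity d (T - t) z)) := by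
    refine Integrable.const_mul ?_ _
    exact integrable_finset_sum _ fun j _ => ((expInner_gauss_integrable hs _).const_mul _)
  have h := integral_mono (integrable_Nk hm hp hγ hT k) hbound (term_le hm hp hγ hT k)
  refine h.trans_eq ?_
  rw [MeasureTheory.integral_const_mul]
  congr 1
  rw [integral_finset_sum _ fun j _ => ((expInner_gauss_integrable hs _).const_mul _)]
  refine Finset.sum_congr rfl fun j _ => ?_
  rw [MeasureTheory.integral_const_mul, expInner_gauss_integral hs]

lemma pow_split (hm : 0 < m) (hp : ∀ k, 0 < p k) (hγ : 1 ≤ γ) :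
    ∀ z : Fin d → ℝ, priorF d m p ϑ T (y + z) ^ γ * gaussDensity d (T - t) z =
      ∑ k, priorF d m p ϑ T (y + z) ^ (γ - 1) *
        (p k * likelihood d T (ϑ k) (y + z)) * gaussDensity d (T - t) z := by
  intro z
  have hF := priorF_pos hm hp ϑ T (y + z)
  have h1 : priorF d m p ϑ T (y + z) ^ γ =
      priorF d m p ϑ T (y + z) ^ (γ - 1) * priorF d m p ϑ T (y + z) := by
    conv_lhs => rw [show γ = (γ - 1) + 1 by ring]
    rw [Real.rpow_add hF, Real.rpow_one]
  rw [h1]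
  have h2 : ∀ A φv : ℝ, A * (priorF d m p ϑ T (y + z)) * φv =
      ∑ k, A * (p k * likelihood d T (ϑ k) (y + z)) * φv := by
    intro A φv
    rw [priorF, Finset.mul_sum, Finset.sum_mul]
  exact h2 _ _

lemma integrable_D (hm : 0 < m) (hp : ∀ k, 0 < p k) (hγ : 1 ≤ γ) (hT : t < T) :
    Integrable (fun z : Fin d → ℝ =>
      priorF d m p ϑ T (y + z) ^ γ * gaussDensity d (T - t) z) := by
  have key := pow_split (ϑ := ϑ) (y := y) hm hp hγ (T := T) (t := t)
  have := integrable_finset_sum (μ := (volume : Measure (Fin d → ℝ))) Finset.univ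
    (f := fun (k : Fin m) (z : Fin d → ℝ) => priorF d m p ϑ T (y + z) ^ (γ - 1) *
      (p k * likelihood d T (ϑ k) (y + z)) * gaussDensity d (T - t) z)
    (fun k _ => integrable_Nk hm hp hγ hT k)
  exact this.congr (Filter.Eventually.of_forall fun z => (key z).symm)

lemma DInt_eq_sum (hm : 0 < m) (hp : ∀ k, 0 < p k) (hγ : 1 ≤ γ) (hT : t < T) :
    DInt d m p ϑ γ t y T = ∑ k, NkInt d m p ϑ γ t y k T := by
  unfold DInt NkInt
  rw [← integral_finset_sum _ fun k _ => integrable_Nk (y := y) hm hp hγ hT k]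
  exact integral_congr_ae (Filter.Eventually.of_forall fun z =>
    pow_split (ϑ := ϑ) (y := y) hm hp hγ (T := T) (t := t) z)

end Main

-- ineq lemma
lemma key_ineq {γ a c b P : ℝ} (hγ : 1 < γ) (ha : 0 ≤ a) (hc : 0 ≤ c) (hab : a ≤ b)
    (hcb : c < b) (hP : P ≤ a * c) :
    (γ - 2) * a ^ 2 + 2 * P - γ * b ^ 2 < 0 := by
  have hb : 0 ≤ b := le_trans ha hab
  have h1 : γ * (a ^ 2 - b ^ 2) ≤ 1 * (a ^ 2 - b ^ 2) :=
    mul_le_mul_of_nonpos_right (le_of_lt hγ) (by nlinarith)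
  have h2 : (0:ℝ) ≤ (a - c) ^ 2 := sq_nonneg _
  have h3 : c ^ 2 < b ^ 2 := by nlinarith
  nlinarith

-- cauchy schwarz form
lemma cs_bound {d : ℕ} (v w : Fin d → ℝ) :
    (∑ i, v i * w i) ≤ Real.sqrt (∑ i, v i ^ 2) * Real.sqrt (∑ i, w i ^ 2) := by
  have h1 : (∑ i, v i * w i) ≤ |∑ i, v i * w i| := le_abs_self _
  have h2 : |∑ i, v i * w i| = Real.sqrt ((∑ i, v i * w i) ^ 2) := (Real.sqrt_sq_eq_abs _).symm
  have h3 := Finset.sum_mul_sq_le_sq_mul_sq Finset.univ v w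
  calc (∑ i, v i * w i) ≤ Real.sqrt ((∑ i, v i * w i) ^ 2) := h2 ▸ h1
    _ ≤ Real.sqrt ((∑ i, v i ^ 2) * ∑ i, w i ^ 2) := Real.sqrt_le_sqrt h3
    _ = Real.sqrt (∑ i, v i ^ 2) * Real.sqrt (∑ i, w i ^ 2) :=
        Real.sqrt_mul (Finset.sum_nonneg fun i _ => sq_nonneg _) _

lemma sqn_expand {d : ℕ} (a : ℝ) (v w : Fin d → ℝ) :
    ∑ i, ((a • v + w) i) ^ 2 =
      a ^ 2 * (∑ i, v i ^ 2) + 2 * a * (∑ i, v i * w i) + ∑ i, w i ^ 2 := by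
  rw [Finset.mul_sum, Finset.mul_sum, ← Finset.sum_add_distrib, ← Finset.sum_add_distrib]
  refine Finset.sum_congr rfl fun i _ => ?_
  simp only [Pi.add_apply, Pi.smul_apply, smul_eq_mul]
  ring

lemma sqn_smul {d : ℕ} (a : ℝ) (v : Fin d → ℝ) :
    ∑ i, ((a • v) i) ^ 2 = a ^ 2 * ∑ i, v i ^ 2 := by
  rw [Finset.mul_sum]
  refine Finset.sum_congr rfl fun i _ => ?_
  simp only [Pi.smul_apply, smul_eq_mul]
  ring

-- linear to atBot
lemma tendsto_exp_linear {α β : ℝ} (hα : α < 0) :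
    Tendsto (fun T : ℝ => Real.exp (α * T + β)) atTop (nhds 0) := by
  refine Real.tendsto_exp_atBot.comp ?_
  exact tendsto_atBot_add_const_right _ β ((tendsto_const_mul_atBot_of_neg hα).mpr tendsto_id)

section Main2
variable {d m : ℕ} {p : Fin m → ℝ} {ϑ : Fin m → Fin d → ℝ} {γ t T : ℝ} {y : Fin d → ℝ}

lemma NkInt_nonneg (hm : 0 < m) (hp : ∀ k, 0 < p k) (hT : t < T) (k : Fin m) :
    0 ≤ NkInt d m p ϑ γ t y k T :=
  integral_nonneg (term_nonneg hm hp hT k)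

lemma DInt_ge (hm : 0 < m) (hp : ∀ k, 0 < p k) (hγ : 1 ≤ γ) (hT : t < T) (k0 : Fin m) :
    ellC d (p k0) (ϑ k0) y T ^ γ * Real.exp ((T - t) * (∑ i, ((γ • ϑ k0) i) ^ 2) / 2) ≤
      DInt d m p ϑ γ t y T := by
  have hs : 0 < T - t := sub_pos.2 hT
  rw [← expInner_gauss_integral hs, ← MeasureTheory.integral_const_mul]
  refine integral_mono ((expInner_gauss_integrable hs _).const_mul _)
    (integrable_D hm hp hγ hT) fun z => ?_
  have hφ := (gaussDensity_pos (d := d) hs z).le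
  have hx : ∀ j : Fin m, 0 ≤ ellC d (p j) (ϑ j) y T * expInner d (ϑ j) z :=
    fun j => le_of_lt (mul_pos (ellC_pos (hp j) _ _ _) (expInner_pos _ _ _))
  have h1 : ellC d (p k0) (ϑ k0) y T ^ γ * expInner d (γ • ϑ k0) z =
      (ellC d (p k0) (ϑ k0) y T * expInner d (ϑ k0) z) ^ γ := by
    rw [Real.mul_rpow (ellC_pos (hp k0) _ _ _).le (expInner_pos _ _ _).le, expInner_smul]
  have h2 : ellC d (p k0) (ϑ k0) y T * expInner d (ϑ k0) z ≤ priorF d m p ϑ T (y + z) := by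
    rw [priorF_eq]
    exact Finset.single_le_sum (fun j _ => hx j) (Finset.mem_univ k0)
  calc ellC d (p k0) (ϑ k0) y T ^ γ * (expInner d (γ • ϑ k0) z * gaussDensity d (T - t) z)
      = (ellC d (p k0) (ϑ k0) y T * expInner d (ϑ k0) z) ^ γ * gaussDensity d (T - t) z := by
        rw [← h1]; ring
    _ ≤ priorF d m p ϑ T (y + z) ^ γ * gaussDensity d (T - t) z :=
        mul_le_mul_of_nonneg_right (Real.rpow_le_rpow (hx k0) h2 (by linarith)) hφ

lemma vec_eq (hm : 0 < m) (hp : ∀ k, 0 < p k) (hγ : 1 ≤ γ) (hT : t < T) :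
    (∫ z : Fin d → ℝ, (priorF d m p ϑ T (y + z) ^ (γ - 1) * gaussDensity d (T - t) z) •
        ∑ k, (p k * likelihood d T (ϑ k) (y + z)) • ϑ k) =
      ∑ k, NkInt d m p ϑ γ t y k T • ϑ k := by
  have key : ∀ z : Fin d → ℝ,
      (priorF d m p ϑ T (y + z) ^ (γ - 1) * gaussDensity d (T - t) z) •
        ∑ k, (p k * likelihood d T (ϑ k) (y + z)) • ϑ k =
      ∑ k, (priorF d m p ϑ T (y + z) ^ (γ - 1) *
        (p k * likelihood d T (ϑ k) (y + z)) * gaussDensity d (T - t) z) • ϑ k := by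
    intro z
    rw [Finset.smul_sum]
    refine Finset.sum_congr rfl fun k _ => ?_
    rw [smul_smul]
    congr 1
    ring
  rw [integral_congr_ae (Filter.Eventually.of_forall key),
    integral_finset_sum _ fun k _ => (integrable_Nk hm hp hγ hT k).smul_const (ϑ k)]
  exact Finset.sum_congr rfl fun k _ => integral_smul_const _ _

lemma ratio_eq {pj pk pQ uj uk uQ qj qk Q W G : ℝ} (hpj : 0 < pj) (hpk : 0 < pk)
    (hpQ : 0 < pQ) (hγ : 1 ≤ γ) :
    ((pj * Real.exp (uj - qj * T / 2)) ^ (γ - 1) * (pk * Real.exp (uk - qk * T / 2)) *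
        Real.exp ((T - t) * W / 2)) /
      ((pQ * Real.exp (uQ - Q * T / 2)) ^ γ * Real.exp ((T - t) * G / 2)) =
    (pj ^ (γ - 1) * pk / pQ ^ γ) *
      Real.exp (((W - G - qj * (γ - 1) - qk + Q * γ) / 2) * T +
        ((uj * (γ - 1) + uk - uQ * γ) - t * (W - G) / 2)) := by
  rw [Real.mul_rpow hpj.le (Real.exp_pos _).le, Real.mul_rpow hpQ.le (Real.exp_pos _).le,
    exp_rpow', exp_rpow']
  have hnum : pj ^ (γ - 1) * Real.exp ((uj - qj * T / 2) * (γ - 1)) *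
      (pk * Real.exp (uk - qk * T / 2)) * Real.exp ((T - t) * W / 2) =
      (pj ^ (γ - 1) * pk) * Real.exp ((uj - qj * T / 2) * (γ - 1) + (uk - qk * T / 2) +
        (T - t) * W / 2) := by
    rw [Real.exp_add, Real.exp_add]; ring
  have hden : pQ ^ γ * Real.exp ((uQ - Q * T / 2) * γ) * Real.exp ((T - t) * G / 2) =
      pQ ^ γ * Real.exp ((uQ - Q * T / 2) * γ + (T - t) * G / 2) := by
    rw [Real.exp_add]; ring
  rw [hnum, hden, mul_div_mul_comm, ← Real.exp_sub]
  congr 1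
  ring

end Main2

/-- Long-horizon limit of the Bayesian optimal investment fraction for `γ > 1`
(risk aversion `α = 1 - 1/γ ∈ (0,1)`) when the Euclidean norms `‖ϑ_k‖` are strictly
increasing: `lim_{T → ∞} κ(t, T, y) = γ (σᵀ)⁻¹ ϑ_m`, the Merton fraction of the drift
scenario with the largest Euclidean norm. -/
theorem stmt_10 (d m : ℕ) (hd : 1 ≤ d) (hm : 1 ≤ m)
    (σ : Matrix (Fin d) (Fin d) ℝ) (hσ : IsUnit σ.det)
    (p : Fin m → ℝ) (hp : ∀ k, 0 < p k) (hpsum : ∑ k, p k = 1)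
    (ϑ : Fin m → Fin d → ℝ)
    (hnorm : StrictMono fun k : Fin m => Real.sqrt (∑ i, ϑ k i ^ 2))
    (γ : ℝ) (hγ : 1 < γ) (t : ℝ) (ht : 0 ≤ t) (y : Fin d → ℝ) :
    Tendsto (fun T => kappa d m σ p ϑ γ t T y) atTop
      (nhds (γ • ((σ.transpose)⁻¹).mulVec (ϑ ⟨m - 1, by omega⟩))) := by
  have hm0 : 0 < m := hm
  have hγ1 : 1 ≤ γ := hγ.le
  set m' : Fin m := ⟨m - 1, by omega⟩ with hm'
  -- squared norms
  set q : Fin m → ℝ := fun k => ∑ i, ϑ k i ^ 2 with hq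
  have hqnn : ∀ k, 0 ≤ q k := fun k => Finset.sum_nonneg fun i _ => sq_nonneg _
  have hkle : ∀ k : Fin m, k ≤ m' := by
    intro k
    have hk := k.isLt
    rw [Fin.le_def]
    show (k : ℕ) ≤ m - 1
    omega
  have hqle : ∀ k, q k ≤ q m' := by
    intro k
    have h := hnorm.monotone (hkle k)
    nlinarith [Real.sq_sqrt (hqnn k), Real.sq_sqrt (hqnn m'), h,
      Real.sqrt_nonneg (q k), Real.sqrt_nonneg (q m')]
  have hqlt : ∀ k, k ≠ m' → q k < q m' := by
    intro k hk
    have hklt : k < m' := lt_of_le_of_ne (hkle k) hk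
    have h := hnorm hklt
    nlinarith [Real.sq_sqrt (hqnn k), Real.sq_sqrt (hqnn m'), h,
      Real.sqrt_nonneg (q k), Real.sqrt_nonneg (q m')]
  have hqm'pos : ∀ k, k ≠ m' → 0 < q m' := fun k hk => (hqnn k).trans_lt (hqlt k hk)
  -- lower bound positivity
  have hLBpos : ∀ T : ℝ, t < T → 0 <
      ellC d (p m') (ϑ m') y T ^ γ * Real.exp ((T - t) * (∑ i, ((γ • ϑ m') i) ^ 2) / 2) :=
    fun T hT => mul_pos (Real.rpow_pos_of_pos (ellC_pos (hp m') _ _ _) _) (Real.exp_pos _)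
  have hDpos : ∀ T : ℝ, t < T → 0 < DInt d m p ϑ γ t y T :=
    fun T hT => (hLBpos T hT).trans_le (DInt_ge hm0 hp hγ1 hT m')
  -- Step A : ratios tend to 0 for k ≠ m'
  have stepA : ∀ k : Fin m, k ≠ m' →
      Tendsto (fun T => NkInt d m p ϑ γ t y k T / DInt d m p ϑ γ t y T) atTop (nhds 0) := by
    intro k hk
    set G : ℝ := ∑ i, ((γ • ϑ m') i) ^ 2 with hG
    set W : Fin m → ℝ := fun j => ∑ i, (((γ - 1) • ϑ j + ϑ k) i) ^ 2 with hW
    set P : Fin m → ℝ := fun j => ∑ i, ϑ j i * ϑ k i with hP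
    have hGq : G = γ ^ 2 * q m' := sqn_smul γ (ϑ m')
    have hWq : ∀ j, W j = (γ - 1) ^ 2 * q j + 2 * (γ - 1) * P j + q k :=
      fun j => sqn_expand (γ - 1) (ϑ j) (ϑ k)
    set α : Fin m → ℝ := fun j => (W j - G - q j * (γ - 1) - q k + q m' * γ) / 2 with hα
    set β : Fin m → ℝ := fun j =>
      ((∑ i, y i * ϑ j i) * (γ - 1) + (∑ i, y i * ϑ k i) - (∑ i, y i * ϑ m' i) * γ)
        - t * (W j - G) / 2 with hβ
    set K : Fin m → ℝ := fun j => p j ^ (γ - 1) * p k / p m' ^ γ with hK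
    have hαneg : ∀ j, α j < 0 := by
      intro j
      have hcs : P j ≤ Real.sqrt (q j) * Real.sqrt (q k) := cs_bound (ϑ j) (ϑ k)
      have hab : Real.sqrt (q j) ≤ Real.sqrt (q m') := Real.sqrt_le_sqrt (hqle j)
      have hcb : Real.sqrt (q k) < Real.sqrt (q m') :=
        Real.sqrt_lt_sqrt (hqnn k) (hqlt k hk)
      have hkey := key_ineq hγ (Real.sqrt_nonneg (q j)) (Real.sqrt_nonneg (q k)) hab hcb hcs
      rw [Real.sq_sqrt (hqnn j), Real.sq_sqrt (hqnn m')] at hkey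
      have h2 : 2 * α j = (γ - 1) * ((γ - 2) * q j + 2 * P j - γ * q m') := by
        rw [hα]
        simp only
        rw [hWq j, hGq]
        ring
      nlinarith [mul_neg_of_pos_of_neg (by linarith : (0:ℝ) < γ - 1) hkey]
    set g : ℝ → ℝ := fun T => (m : ℝ) ^ (γ - 1) * ∑ j, K j * Real.exp (α j * T + β j) with hg
    have hgt : Tendsto g atTop (nhds 0) := by
      have : Tendsto (fun T => ∑ j, K j * Real.exp (α j * T + β j)) atTop
          (nhds (∑ j : Fin m, K j * 0)) :=
        tendsto_finset_sum _ fun j _ => (tendsto_exp_linear (hαneg j)).const_mul (K j)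
      have h0 : (∑ j : Fin m, K j * 0) = 0 := by simp
      rw [h0] at this
      simpa using this.const_mul ((m : ℝ) ^ (γ - 1))
    refine squeeze_zero' ?_ ?_ hgt
    · filter_upwards [eventually_gt_atTop t] with T hT
      exact div_nonneg (NkInt_nonneg hm0 hp hT k) (hDpos T hT).le
    · filter_upwards [eventually_gt_atTop t] with T hT
      have hUBnn : (0:ℝ) ≤ (m : ℝ) ^ (γ - 1) *
          ∑ j, ellC d (p j) (ϑ j) y T ^ (γ - 1) * ellC d (p k) (ϑ k) y T *
            Real.exp ((T - t) * W j / 2) := by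
        refine mul_nonneg (Real.rpow_nonneg (Nat.cast_nonneg m) _) ?_
        refine Finset.sum_nonneg fun j _ => ?_
        have := ellC_pos (hp j) (ϑ j) y T
        have := ellC_pos (hp k) (ϑ k) y T
        positivity
      have hdiv : NkInt d m p ϑ γ t y k T / DInt d m p ϑ γ t y T ≤
          ((m : ℝ) ^ (γ - 1) * ∑ j, ellC d (p j) (ϑ j) y T ^ (γ - 1) *
            ellC d (p k) (ϑ k) y T * Real.exp ((T - t) * W j / 2)) /
          (ellC d (p m') (ϑ m') y T ^ γ * Real.exp ((T - t) * G / 2)) :=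
        div_le_div₀ hUBnn (NkInt_le hm0 hp hγ1 hT k) (hLBpos T hT) (DInt_ge hm0 hp hγ1 hT m')
      refine hdiv.trans_eq ?_
      rw [mul_div_assoc, Finset.sum_div]
      rw [hg]
      congr 1
      refine Finset.sum_congr rfl fun j _ => ?_
      exact ratio_eq (hp j) (hp k) (hp m') hγ1
  -- Step B : ratio for m' tends to 1
  have stepB : Tendsto (fun T => NkInt d m p ϑ γ t y m' T / DInt d m p ϑ γ t y T)
      atTop (nhds 1) := by
    have hsum : ∀ᶠ T in atTop, NkInt d m p ϑ γ t y m' T / DInt d m p ϑ γ t y T =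
        1 - ∑ j ∈ Finset.univ.erase m', NkInt d m p ϑ γ t y j T / DInt d m p ϑ γ t y T := by
      filter_upwards [eventually_gt_atTop t] with T hT
      have hD := hDpos T hT
      have h1 : (∑ j, NkInt d m p ϑ γ t y j T / DInt d m p ϑ γ t y T) = 1 := by
        rw [← Finset.sum_div, ← DInt_eq_sum hm0 hp hγ1 hT, div_self hD.ne']
      have h2 := Finset.add_sum_erase Finset.univ
        (fun j => NkInt d m p ϑ γ t y j T / DInt d m p ϑ γ t y T) (Finset.mem_univ m')
      linarith [h2.symm ▸ h1]
    have herase : Tendsto (fun T => ∑ j ∈ Finset.univ.erase m',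
        NkInt d m p ϑ γ t y j T / DInt d m p ϑ γ t y T) atTop (nhds 0) := by
      have : Tendsto (fun T => ∑ j ∈ Finset.univ.erase m',
          NkInt d m p ϑ γ t y j T / DInt d m p ϑ γ t y T) atTop
          (nhds (∑ j ∈ Finset.univ.erase m', (0:ℝ))) :=
        tendsto_finset_sum _ fun j hj => stepA j (Finset.ne_of_mem_erase hj)
      simpa using this
    have h3 := (tendsto_const_nhds (x := (1:ℝ)) (f := atTop)).sub herase
    rw [sub_zero] at h3
    exact Tendsto.congr' (by filter_upwards [hsum] with T h using h.symm) h3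
  -- Step D : vector convergence
  have stepD : Tendsto (fun T => ∑ k, (NkInt d m p ϑ γ t y k T / DInt d m p ϑ γ t y T) • ϑ k)
      atTop (nhds (ϑ m')) := by
    have : Tendsto (fun T => ∑ k, (NkInt d m p ϑ γ t y k T / DInt d m p ϑ γ t y T) • ϑ k)
        atTop (nhds (∑ k, (if k = m' then (1:ℝ) else 0) • ϑ k)) := by
      refine tendsto_finset_sum _ fun k _ => ?_
      by_cases hk : k = m'
      · rw [hk]; simpa using stepB.smul_const (ϑ m')
      · simpa [hk] using (stepA k hk).smul_const (ϑ k)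
    have hval : (∑ k, (if k = m' then (1:ℝ) else 0) • ϑ k) = ϑ m' := by
      rw [Finset.sum_eq_single m']
      · simp
      · intro b _ hb; simp [hb]
      · intro h; exact absurd (Finset.mem_univ m') h
    rwa [hval] at this
  -- Step C+E : conclude
  have hcontM : Continuous fun v : Fin d → ℝ => γ • (σ.transpose)⁻¹.mulVec v := by
    refine Continuous.const_smul ?_ γ
    refine continuous_pi fun j => ?_
    simp only [Matrix.mulVec, dotProduct]
    exact continuous_finset_sum _ fun i _ => continuous_const.mul (continuous_apply i)
  have final := (hcontM.tendsto (ϑ m')).comp stepD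
  refine Tendsto.congr' ?_ final
  filter_upwards [eventually_gt_atTop t] with T hT
  have hkap : kappa d m σ p ϑ γ t T y = γ • (σ.transpose)⁻¹.mulVec
      ((DInt d m p ϑ γ t y T)⁻¹ • ∑ k, NkInt d m p ϑ γ t y k T • ϑ k) := by
    rw [kappa, vec_eq hm0 hp hγ1 hT]
    rfl
  have hscal : (DInt d m p ϑ γ t y T)⁻¹ • (∑ k, NkInt d m p ϑ γ t y k T • ϑ k) =
      ∑ k, (NkInt d m p ϑ γ t y k T / DInt d m p ϑ γ t y T) • ϑ k := by
    rw [Finset.smul_sum]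
    refine Finset.sum_congr rfl fun k _ => ?_
    rw [smul_smul, div_eq_inv_mul]
  show γ • (σ.transpose)⁻¹.mulVec
      (∑ k, (NkInt d m p ϑ γ t y k T / DInt d m p ϑ γ t y T) • ϑ k) =
    kappa d m σ p ϑ γ t T y
  rw [hkap, hscal]
end

section
/- Let m ≥ 2 and let 0 ≤ a_1 < a_2 < … < a_m be real numbers. Let n, l be positive integers with γ := n/l > 1, and let β = (β_1, …, β_m) be a vector of nonnegative integers with ∑_{k=1}^m β_k = n and β_k < n for every k (so that at least two entries of β are nonzero). Then (∑_{k=1}^m (β_k/l) a_k)² − ∑_{k=1}^m (β_k/l) a_k² < a_m² · γ(γ−1). -/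
/-!
Put `c_k = β_k / l`, so that `γ = ∑ c_k`, and let `S = ∑ c_k a_k`, `Q = ∑ c_k a_k²`. Two of the
weights are positive and sit at distinct points `a_i ≠ a_j`, so by Lagrange's identity the weighted
Cauchy–Schwarz inequality `S² ≤ γ Q` is strict. Since `0 ≤ S ≤ γ a_m` and `γ ≥ 1`,
`S² − Q < S² (1 − 1/γ) ≤ (γ a_m)² (1 − 1/γ) = a_m² γ (γ − 1)`.
-/

open Finset

section WeightedCauchySchwarz

variable {ι : Type*} [Fintype ι] (c a : ι → ℝ)

theorem sum_sum_mul_mul_sub_sq :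
    ∑ p, ∑ q, c p * c q * (a p - a q) ^ 2
      = 2 * ((∑ k, c k) * ∑ k, c k * a k ^ 2 - (∑ k, c k * a k) ^ 2) := by
  have hrow : ∀ p, ∑ q, c p * c q * (a p - a q) ^ 2 = c p * a p ^ 2 * ∑ q, c q
      - c p * a p * (2 * ∑ q, c q * a q) + c p * ∑ q, c q * a q ^ 2 := fun p => by
    simp only [mul_sum, ← sum_sub_distrib, ← sum_add_distrib]
    exact sum_congr rfl fun q _ => by ring
  simp only [hrow, sum_add_distrib, sum_sub_distrib, ← sum_mul]
  ring

variable {c} in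
theorem sq_sum_mul_lt_sum_mul_sum_mul_sq (hc : ∀ k, 0 ≤ c k) {i j : ι} (hi : 0 < c i)
    (hj : 0 < c j) (hij : a i ≠ a j) :
    (∑ k, c k * a k) ^ 2 < (∑ k, c k) * ∑ k, c k * a k ^ 2 := by
  have hterm : ∀ p q, 0 ≤ c p * c q * (a p - a q) ^ 2 := fun p q => by
    have := hc p; have := hc q; positivity
  have hpos : 0 < ∑ p, ∑ q, c p * c q * (a p - a q) ^ 2 := by
    have hij' : 0 < c i * c j * (a i - a j) ^ 2 := by
      have := sub_ne_zero.mpr hij; positivity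
    calc 0 < c i * c j * (a i - a j) ^ 2 := hij'
      _ ≤ ∑ q, c i * c q * (a i - a q) ^ 2 :=
          single_le_sum (fun q _ => hterm i q) (mem_univ j)
      _ ≤ ∑ p, ∑ q, c p * c q * (a p - a q) ^ 2 :=
          single_le_sum (fun p _ => sum_nonneg fun q _ => hterm p q) (mem_univ i)
  rw [sum_sum_mul_mul_sub_sq] at hpos
  linarith

end WeightedCauchySchwarz

theorem exists_ne_pos_of_lt_sum {ι : Type*} [Fintype ι] [DecidableEq ι] {f : ι → ℕ} {k : ι}
    (h : f k < ∑ i, f i) : ∃ j ≠ k, 0 < f j := by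
  rw [← add_sum_erase _ _ (mem_univ k)] at h
  obtain ⟨j, hj, hfj⟩ := exists_ne_zero_of_sum_ne_zero (by omega : ∑ i ∈ univ.erase k, f i ≠ 0)
  exact ⟨j, ne_of_mem_erase hj, Nat.pos_of_ne_zero hfj⟩

theorem sq_sub_lt_sq_mul_mul_sub_one {S Q γ A : ℝ} (hγ : 1 ≤ γ) (hS : 0 ≤ S) (hSA : S ≤ γ * A)
    (hCS : S ^ 2 < γ * Q) : S ^ 2 - Q < A ^ 2 * (γ * (γ - 1)) := by
  have hγ0 : 0 < γ := by linarith
  have hS2 : S ^ 2 ≤ (γ * A) ^ 2 := pow_le_pow_left₀ hS hSA 2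
  suffices γ * (S ^ 2 - Q) < γ * (A ^ 2 * (γ * (γ - 1))) from lt_of_mul_lt_mul_left this hγ0.le
  calc γ * (S ^ 2 - Q) < S ^ 2 * (γ - 1) := by linarith
    _ ≤ (γ * A) ^ 2 * (γ - 1) := mul_le_mul_of_nonneg_right hS2 (by linarith)
    _ = γ * (A ^ 2 * (γ * (γ - 1))) := by ring

/-- Key exponent estimate: for `0 ≤ a_1 < … < a_m`, `γ = n/l > 1` and a multi-index `β` with
`∑ β_k = n` and `β_k < n` for every `k`,
`(∑_k (β_k/l) a_k)² − ∑_k (β_k/l) a_k² < a_m² γ(γ−1)`. -/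
theorem stmt_14 (m : ℕ) (hm : 2 ≤ m) (a : Fin m → ℝ)
    (ha0 : 0 ≤ a ⟨0, by omega⟩) (hmono : StrictMono a)
    (n l : ℕ) (hl : 0 < l)
    (γ : ℝ) (hγ : γ = (n : ℝ) / l) (hγ1 : 1 < γ)
    (β : Fin m → ℕ) (hβsum : ∑ k, β k = n) (hβ : ∀ k, β k < n) :
    (∑ k, ((β k : ℝ) / l) * a k) ^ 2 - ∑ k, ((β k : ℝ) / l) * a k ^ 2
      < a ⟨m - 1, by omega⟩ ^ 2 * (γ * (γ - 1)) := by
  set c : Fin m → ℝ := fun k => (β k : ℝ) / l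
  have hc : ∀ k, 0 ≤ c k := fun k => by positivity
  have hγc : γ = ∑ k, c k := by rw [hγ, ← hβsum]; push_cast; rw [sum_div]
  have ha : ∀ k, 0 ≤ a k := fun k =>
    ha0.trans (hmono.monotone (Fin.mk_le_of_le_val (Nat.zero_le _)))
  have haA : ∀ k, a k ≤ a ⟨m - 1, by omega⟩ := fun k =>
    hmono.monotone (Fin.le_def.2 (Nat.le_sub_one_of_lt k.isLt))
  obtain ⟨j, -, hj⟩ := exists_ne_pos_of_lt_sum (hβsum ▸ hβ ⟨0, by omega⟩)
  obtain ⟨i, hij, hi⟩ := exists_ne_pos_of_lt_sum (hβsum ▸ hβ j)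
  apply sq_sub_lt_sq_mul_mul_sub_one hγ1.le
  · exact sum_nonneg fun k _ => mul_nonneg (hc k) (ha k)
  · rw [hγc, sum_mul]
    exact sum_le_sum fun k _ => mul_le_mul_of_nonneg_left (haA k) (hc k)
  · rw [hγc]
    exact sq_sum_mul_lt_sum_mul_sum_mul_sq a hc (by positivity) (by positivity)
      (hmono.injective.ne hij)
end
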